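/- Let U and V be finite-dimensional real vector spaces, φ : U → V a linear map with dual map φ* : V* → U*, and L ⊆ U ⊕ U* a lagrangian subspace (with respect to the pairing ⟨(X,α),(Y,β)⟩ = β(X) + α(Y)). Then the forward image φ_!L := {(φ(u), β) : u ∈ U, β ∈ V*, (u, φ*(β)) ∈ L} is a lagrangian subspace of V ⊕ V*. -/

import Mathlib

/-- The canonical symmetric pairing on the generalized tangent space `W ⊕ W*`:
`⟨(X,α),(Y,β)⟩ = β(X) + α(Y)`. -/
def gpair {W : Type*} [AddCommGroup W] [Module ℝ W]
    (e e' : W × Module.Dual ℝ W) : ℝ :=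
  e'.2 e.1 + e.2 e'.1

/-- A subset of `W ⊕ W*` is lagrangian if it equals its own orthogonal complement
with respect to the canonical symmetric pairing. -/
def IsLagrangian {W : Type*} [AddCommGroup W] [Module ℝ W]
    (S : Set (W × Module.Dual ℝ W)) : Prop :=
  ∀ e : W × Module.Dual ℝ W, e ∈ S ↔ ∀ e' ∈ S, gpair e e' = 0

/-- The forward image `φ_!L = {(φ(u), β) : (u, φ*(β)) ∈ L}` of a lagrangian subspace
`L ⊆ U ⊕ U*` under a linear map `φ : U → V`. -/
def forwardImage {U V : Type*} [AddCommGroup U] [Module ℝ U] [AddCommGroup V]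
    [Module ℝ V] (φ : U →ₗ[ℝ] V) (L : Set (U × Module.Dual ℝ U)) :
    Set (V × Module.Dual ℝ V) :=
  {e | ∃ (u : U) (β : Module.Dual ℝ V), (u, φ.dualMap β) ∈ L ∧ e = (φ u, β)}

/-!
The forward image is isotropic because `⟨(φ u, β), (φ u', β')⟩ = ⟨(u, φ*β), (u', φ*β')⟩`.
For the converse, let `(v, γ)` be orthogonal to `φ_!L`. Testing against `(0, δ)` with `φ*δ = 0`
puts `v = φ u₀` in the range of `φ`, and then `(u₀, φ*γ)` is orthogonal to `L ∩ (U ⊕ im φ*)`.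
By finite-dimensional duality this orthogonal is `L + (ker φ ⊕ 0)`, so `(u₀, φ*γ) = ℓ + (k, 0)`
with `ℓ ∈ L` and `φ k = 0`, and `ℓ = (u₀ - k, φ*γ)` exhibits `(v, γ) ∈ φ_!L`.
-/

open Module LinearMap Submodule

namespace LinearMap.BilinForm

theorem orthogonal_sup {R M : Type*} [CommRing R] [AddCommGroup M] [Module R M]
    (B : LinearMap.BilinForm R M) (N P : Submodule R M) :
    B.orthogonal (N ⊔ P) = B.orthogonal N ⊓ B.orthogonal P := by
  refine le_antisymm (le_inf (orthogonal_le le_sup_left) (orthogonal_le le_sup_right)) ?_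
  rintro m ⟨hN, hP⟩ x hx
  obtain ⟨n, hn, p, hp, rfl⟩ := mem_sup.1 hx
  rw [map_add, LinearMap.add_apply, hN n hn, hP p hp, add_zero]

theorem orthogonal_inf {K V : Type*} [Field K] [AddCommGroup V] [Module K V]
    [FiniteDimensional K V] {B : LinearMap.BilinForm K V} (hB : B.Nondegenerate) (hB₀ : B.IsRefl)
    (N P : Submodule K V) : B.orthogonal (N ⊓ P) = B.orthogonal N ⊔ B.orthogonal P := by
  rw [← orthogonal_orthogonal hB hB₀ (B.orthogonal N ⊔ B.orthogonal P), orthogonal_sup,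
    orthogonal_orthogonal hB hB₀, orthogonal_orthogonal hB hB₀]

end LinearMap.BilinForm

section Pairing

variable {W : Type*} [AddCommGroup W] [Module ℝ W]

theorem gpair_comm (e e' : W × Dual ℝ W) : gpair e e' = gpair e' e := add_comm _ _

variable (W) in
def gpairForm : LinearMap.BilinForm ℝ (W × Dual ℝ W) :=
  mk₂ ℝ gpair
    (fun _ _ _ => by simp only [gpair]; simp; ring) (fun _ _ _ => by simp [gpair, mul_add])
    (fun _ _ _ => by simp only [gpair]; simp; ring) (fun _ _ _ => by simp [gpair, mul_add])

theorem gpairForm_apply (e e' : W × Dual ℝ W) : gpairForm W e e' = gpair e e' := rfl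

theorem gpairForm_isRefl : (gpairForm W).IsRefl := fun e e' h => by
  rwa [gpairForm_apply, gpair_comm]

theorem gpairForm_nondegenerate : (gpairForm W).Nondegenerate := by
  refine (gpairForm_isRefl (W := W)).nondegenerate_iff_separatingLeft.2 fun e he => Prod.ext ?_ ?_
  · refine (forall_dual_apply_eq_zero_iff ℝ e.1).1 fun β => ?_
    simpa [gpairForm_apply, gpair] using he (0, β)
  · ext w
    simpa [gpairForm_apply, gpair] using he (w, 0)

def IsIsotropic (S : Set (W × Dual ℝ W)) : Prop :=
  ∀ e ∈ S, ∀ e' ∈ S, gpair e e' = 0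

theorem IsLagrangian.isIsotropic {S : Set (W × Dual ℝ W)} (hS : IsLagrangian S) :
    IsIsotropic S :=
  fun e he => (hS e).1 he

theorem IsLagrangian.exists_submodule {S : Set (W × Dual ℝ W)} (hS : IsLagrangian S) :
    ∃ N : Submodule ℝ (W × Dual ℝ W), (N : Set _) = S ∧ (gpairForm W).orthogonal N = N := by
  set N := (gpairForm W).orthogonal (span ℝ S)
  have hNS : (N : Set _) = S := by
    ext e
    rw [hS e, SetLike.mem_coe, BilinForm.mem_orthogonal_iff]
    change span ℝ S ≤ ker ((gpairForm W).flip e) ↔ _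
    rw [span_le]
    exact forall₂_congr fun e' _ => by rw [gpair_comm]; rfl
  refine ⟨N, hNS, ?_⟩
  calc (gpairForm W).orthogonal N = (gpairForm W).orthogonal (span ℝ S) := by
        rw [← hNS, span_eq]
    _ = N := rfl

end Pairing

section ForwardImage

variable {U V : Type*} [AddCommGroup U] [Module ℝ U] [AddCommGroup V] [Module ℝ V]

theorem IsIsotropic.forwardImage {L : Set (U × Dual ℝ U)} (hL : IsIsotropic L)
    (φ : U →ₗ[ℝ] V) : IsIsotropic (forwardImage φ L) := by
  rintro _ ⟨u, β, hu, rfl⟩ _ ⟨u', β', hu', rfl⟩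
  simpa [gpair] using hL _ hu _ hu'

theorem orthogonal_top_prod_range_dualMap (φ : U →ₗ[ℝ] V) :
    (gpairForm U).orthogonal ((⊤ : Submodule ℝ U).prod (range φ.dualMap)) = (ker φ).prod ⊥ := by
  ext ⟨u, α⟩
  simp only [BilinForm.mem_orthogonal_iff, mem_prod, mem_top, true_and, Prod.forall,
    mem_range, forall_exists_index, forall_apply_eq_imp_iff, gpairForm_apply, gpair,
    dualMap_apply, mem_ker, mem_bot]
  constructor
  · intro h
    refine ⟨(forall_dual_apply_eq_zero_iff ℝ (φ u)).1 fun β => by simpa using h 0 β, ?_⟩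
    ext w
    simpa using h w 0
  · rintro ⟨hu, rfl⟩ w β
    simp [hu]

theorem mem_forwardImage_of_forall_gpair_eq_zero [FiniteDimensional ℝ U] (φ : U →ₗ[ℝ] V)
    {N : Submodule ℝ (U × Dual ℝ U)} (hN : (gpairForm U).orthogonal N = N)
    {e : V × Dual ℝ V} (he : ∀ e' ∈ forwardImage φ N, gpair e e' = 0) :
    e ∈ forwardImage φ N := by
  obtain ⟨v, γ⟩ := e
  obtain ⟨u₀, rfl⟩ : v ∈ range φ := by
    rw [← Subspace.forall_mem_dualAnnihilator_apply_eq_zero_iff,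
      ← ker_dualMap_eq_dualAnnihilator_range]
    intro δ hδ
    have h0 : (0, φ.dualMap δ) ∈ N := by rw [mem_ker.1 hδ]; exact N.zero_mem
    simpa [gpair] using he (0, δ) ⟨0, δ, h0, by simp⟩
  have horth : (u₀, φ.dualMap γ) ∈
      (gpairForm U).orthogonal (N ⊓ (⊤ : Submodule ℝ U).prod (range φ.dualMap)) := by
    rintro ⟨w, _⟩ ⟨hwN, -, β, rfl⟩
    have := he (φ w, β) ⟨w, β, hwN, rfl⟩
    simp only [gpairForm_apply, gpair, dualMap_apply] at this ⊢
    linarith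
  rw [BilinForm.orthogonal_inf gpairForm_nondegenerate gpairForm_isRefl, hN,
    orthogonal_top_prod_range_dualMap] at horth
  obtain ⟨ℓ, hℓ, ⟨k, α⟩, ⟨hk, hα⟩, hsum⟩ := mem_sup.1 horth
  obtain rfl : α = 0 := (mem_bot ℝ).1 hα
  obtain rfl : ℓ = (u₀ - k, φ.dualMap γ) := by
    rw [eq_sub_of_add_eq hsum, Prod.mk_sub_mk, sub_zero]
  refine ⟨u₀ - k, γ, hℓ, ?_⟩
  rw [map_sub, mem_ker.1 hk, sub_zero]

end ForwardImage

theorem forwardImage_lagrangian_general {U V : Type*}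
    [AddCommGroup U] [Module ℝ U] [FiniteDimensional ℝ U]
    [AddCommGroup V] [Module ℝ V]
    (φ : U →ₗ[ℝ] V) (L : Set (U × Module.Dual ℝ U)) (hL : IsLagrangian L) :
    IsLagrangian (forwardImage φ L) := by
  obtain ⟨N, rfl, hN⟩ := hL.exists_submodule
  exact fun e => ⟨fun he => hL.isIsotropic.forwardImage φ e he,
    mem_forwardImage_of_forall_gpair_eq_zero φ hN⟩

/-- The forward image of a lagrangian subspace `L ⊆ U ⊕ U*` under a linear map
`φ : U → V` is a lagrangian subspace of `V ⊕ V*`. -/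
theorem forwardImage_lagrangian {U V : Type*}
    [AddCommGroup U] [Module ℝ U] [FiniteDimensional ℝ U]
    [AddCommGroup V] [Module ℝ V] [FiniteDimensional ℝ V]
    (φ : U →ₗ[ℝ] V) (L : Set (U × Module.Dual ℝ U)) (hL : IsLagrangian L) :
    IsLagrangian (forwardImage φ L) :=
  forwardImage_lagrangian_general φ L hL
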